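/- Let I ⊂ S be a generalized Cohen–Macaulay monomial ideal, i.e., H^i_m(S/I) has finite length for all i ≠ dim(S/I). Then b_i(S/I) ≥ 0 for all i < dim(S/I), where b_i(R) = inf{ j : H^i_m(R)_j ≠ 0 }. -/
import Mathlib


/- STATEMENT 11: if I ⊂ S is a generalized Cohen–Macaulay monomial ideal
(H^i_m(S/I) has finite length, i.e. only finitely many multidegrees a carry a
nonzero component, for i ≠ dim S/I), then b_i(S/I) ≥ 0 for all i < dim S/I:
the degree-a component of H^i_m(S/I) (computed via the ℤⁿ-graded Čech complex,
`lcRank`) vanishes whenever Σ_j a_j < 0. -/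

open Finset
open scoped Classical

noncomputable section

variable (K : Type) [Field K] {n : ℕ}

def Ga (a : Fin n → ℤ) : Finset (Fin n) := Finset.univ.filter (fun i => a i < 0)

/-- the non-vanishing condition for the component of the Čech complex indexed by `F`. -/
def valid (G : Finset (Fin n → ℕ)) (a : Fin n → ℤ) (F : Finset (Fin n)) : Prop :=
  Ga a ⊆ F ∧ ∀ u ∈ G, ∃ j, j ∉ F ∧ 0 ≤ a j ∧ a j < (u j : ℤ)

def deltaA (G : Finset (Fin n → ℕ)) (a : Fin n → ℤ) : Set (Finset (Fin n)) :=
  { s | ∃ F : Finset (Fin n), valid G a F ∧ s = F \ Ga a }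

/-- the group of `i`-chains of the augmented oriented chain complex of `Δ`, with
coefficients in `K`: the free `K`-module on the faces of dimension `i` (cardinality
`i+1`); for `i = -1` this is spanned by `∅` if `∅ ∈ Δ`. -/
abbrev chainGroup (Δ : Set (Finset (Fin n))) (i : ℤ) : Type :=
  {F : Finset (Fin n) // F ∈ Δ ∧ (F.card : ℤ) = i + 1} →₀ K

/-- the boundary map `∂ F = Σ_j (-1)^j F_j` of the augmented oriented chain complex. -/
def bdry (Δ : Set (Finset (Fin n))) (i : ℤ) :
    chainGroup K Δ i →ₗ[K] chainGroup K Δ (i - 1) :=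
  Finsupp.lsum K fun F =>
    LinearMap.toSpanSingleton K _
      (∑ j : Fin (F.1.sort (· ≤ ·)).length,
        ((-1 : K) ^ (j : ℕ)) •
          (if h : (F.1.erase ((F.1.sort (· ≤ ·)).get j)) ∈ Δ ∧
              (((F.1.erase ((F.1.sort (· ≤ ·)).get j)).card : ℤ) = (i - 1) + 1)
           then Finsupp.single
             (⟨F.1.erase ((F.1.sort (· ≤ ·)).get j), h⟩ :
               {F' : Finset (Fin n) // F' ∈ Δ ∧ (F'.card : ℤ) = (i - 1) + 1}) (1 : K)
           else 0))

/-- `dim_K H̃_i(Δ; K)`, the dimension of the `i`-th reduced simplicial homology. -/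
def redHomRank (Δ : Set (Finset (Fin n))) (i : ℤ) : ℕ :=
  Module.finrank K (LinearMap.ker (bdry K Δ i)) -
    Module.finrank K (LinearMap.range (bdry K Δ (i + 1)))

/-- basis of the degree-`a` piece of the `t`-th term of the Čech complex of `R = S/I`
on `x_1,…,x_n` (Lemma 1 of the paper): subsets `F` with `|F| = t`, `F ⊇ G_a`,
satisfying the non-vanishing condition. -/
abbrev cechC (G : Finset (Fin n → ℕ)) (a : Fin n → ℤ) (t : ℕ) : Type :=
  {F : Finset (Fin n) // F.card = t ∧ valid G a F} →₀ K

/-- the differential of the degree-`a` piece of the Čech complex. -/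
def cechD (G : Finset (Fin n → ℕ)) (a : Fin n → ℤ) (t : ℕ) :
    cechC K G a t →ₗ[K] cechC K G a (t + 1) :=
  Finsupp.lsum K fun F =>
    LinearMap.toSpanSingleton K _
      (∑ j ∈ Finset.univ.filter (fun j => j ∉ F.1),
        ((-1 : K) ^ ((F.1.filter (fun k => k < j)).card)) •
          (if h : (insert j F.1).card = t + 1 ∧ valid G a (insert j F.1)
           then Finsupp.single (⟨insert j F.1, h⟩ :
               {F' : Finset (Fin n) // F'.card = t + 1 ∧ valid G a F'}) (1 : K)
           else 0))

/-- `dim_K H^i_m(R)_a = dim_K H^i((C^•)_a)`, the dimension of the degree-`a`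
component of the `i`-th local cohomology of `R = S/I`, computed via the
ℤⁿ-graded Čech complex on `x_1,…,x_n`. -/
def lcRank (G : Finset (Fin n → ℕ)) (a : Fin n → ℤ) (i : ℕ) : ℕ :=
  Module.finrank K (LinearMap.ker (cechD K G a i)) -
    (match i with
     | 0 => 0
     | Nat.succ i => Module.finrank K (LinearMap.range (cechD K G a i)))


def mon (u : Fin n → ℕ) : MvPolynomial (Fin n) K :=
  MvPolynomial.monomial (Finsupp.equivFunOnFinite.symm u) (1 : K)

/-- abstract version of `cechC` depending only on a predicate `V`. -/
abbrev cechC' (V : Finset (Fin n) → Prop) (t : ℕ) : Type :=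
  {F : Finset (Fin n) // F.card = t ∧ V F} →₀ K

/-- abstract version of `cechD` depending only on a predicate `V`. -/
def cechD' (V : Finset (Fin n) → Prop) (t : ℕ) :
    cechC' K V t →ₗ[K] cechC' K V (t + 1) :=
  Finsupp.lsum K fun F =>
    LinearMap.toSpanSingleton K _
      (∑ j ∈ Finset.univ.filter (fun j => j ∉ F.1),
        ((-1 : K) ^ ((F.1.filter (fun k => k < j)).card)) •
          (if h : (insert j F.1).card = t + 1 ∧ V (insert j F.1)
           then Finsupp.single (⟨insert j F.1, h⟩ :
               {F' : Finset (Fin n) // F'.card = t + 1 ∧ V F'}) (1 : K)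
           else 0))

/-- abstract version of `lcRank` depending only on a predicate `V`. -/
def lcRank' (V : Finset (Fin n) → Prop) (i : ℕ) : ℕ :=
  Module.finrank K (LinearMap.ker (cechD' K V i)) -
    (match i with
     | 0 => 0
     | Nat.succ i => Module.finrank K (LinearMap.range (cechD' K V i)))

lemma lcRank_eq_lcRank' (G : Finset (Fin n → ℕ)) (a : Fin n → ℤ) (i : ℕ) :
    lcRank K G a i = lcRank' K (valid G a) i := rfl

lemma lcRank_congr (G : Finset (Fin n → ℕ)) (a a' : Fin n → ℤ)
    (h : ∀ F, valid G a F ↔ valid G a' F) (i : ℕ) :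
    lcRank K G a i = lcRank K G a' i := by
  have hv : valid G a = valid G a' := funext fun F => propext (h F)
  rw [lcRank_eq_lcRank', lcRank_eq_lcRank', hv]

theorem b_nonneg_of_generalizedCM
    (G : Finset (Fin n → ℕ))
    (hmin : ∀ u ∈ G, ∀ v ∈ G, (∀ j, u j ≤ v j) → u = v) (hne : ∀ u ∈ G, u ≠ 0)
    (I : Ideal (MvPolynomial (Fin n) K)) (hI : I = Ideal.span ((mon K) '' G))
    (hGCM : ∀ i : ℕ, ((i : ℕ∞) : WithBot ℕ∞) ≠ ringKrullDim (MvPolynomial (Fin n) K ⧸ I) →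
        {a : Fin n → ℤ | lcRank K G a i ≠ 0}.Finite)
    (i : ℕ) (hi : ((i : ℕ∞) : WithBot ℕ∞) < ringKrullDim (MvPolynomial (Fin n) K ⧸ I))
    (a : Fin n → ℤ) (ha : (∑ j, a j) < 0) :
    lcRank K G a i = 0 := by
  by_contra h0
  -- some coordinate of `a` is negative
  obtain ⟨l, hl⟩ : ∃ l, a l < 0 := by
    by_contra hc
    push_neg at hc
    exact absurd (Finset.sum_nonneg fun j _ => hc j) (not_le.mpr ha)
  -- the family of degrees obtained by pushing the `l`-th coordinate down
  set f : ℕ → (Fin n → ℤ) := fun m j => if j = l then a j - m else a j with hf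
  have hfl : ∀ m, f m l = a l - m := fun m => by simp [hf]
  have hinj : Function.Injective f := by
    intro m m' hmm
    have := congrFun hmm l
    rw [hfl, hfl] at this
    omega
  -- `valid` is unchanged along this family
  have hvalid : ∀ m F, valid G (f m) F ↔ valid G a F := by
    intro m F
    have hGa : Ga (f m) = Ga a := by
      ext j
      by_cases hj : j = l
      · subst hj; simp only [Ga, Finset.mem_filter, Finset.mem_univ, true_and, hfl]; omega
      · simp [Ga, hf, hj]
    unfold valid
    rw [hGa]
    refine and_congr_right fun _ => forall₂_congr fun u _ => exists_congr fun j => ?_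
    by_cases hj : j = l
    · subst hj
      simp only [hfl]
      omega
    · simp [hf, hj]
  have hmem : ∀ m, f m ∈ {b : Fin n → ℤ | lcRank K G b i ≠ 0} := by
    intro m
    simpa [Set.mem_setOf_eq, lcRank_congr K G (f m) a (hvalid m) i] using h0
  have hinf : {b : Fin n → ℤ | lcRank K G b i ≠ 0}.Infinite :=
    Set.infinite_of_injective_forall_mem hinj hmem
  exact hinf (hGCM i (ne_of_lt hi))

end
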